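/- Let Φ : C → C and Ψ : D → D be endofunctors with initial algebras ι_Φ and ι_Ψ (with carriers μΦ and μΨ), let (L ⊣ R, η, ε) : C ⇄ D be an adjunction with L full and faithful, let ρ : LΦR ⇒ Ψ be a natural transformation, and assume D has an initial object and all colimits of chains. If (1) the adjoint transpose ρ‾ : ΦR ⇒ RΨ of ρ is a natural isomorphism (or alternatively ρL ∘ LΦη : LΦ ⇒ ΨL is a natural isomorphism), (2) the initial chain of Ψ converges, and (3) every object Ψ^i 0 of the initial chain of Ψ lies in Fix_ε(D), then the initial algebra correspondence for Φ and Ψ holds, i.e. ι_Φ is initial in Alg(Φ)|Fix_η(C) and Alg_{id,ρ}(ι_Ψ) is initial in Alg(LΦR)|Fix_ε(D). Furthermore, if Fix_ε(D) is downward closed in D (Y ∈ Fix_ε(D) and the existence of a morphism X → Y in D imply X ∈ Fix_ε(D)), then condition (3) is implied by the global reachability condition μΨ ∈ Fix_ε(D). -/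

import Mathlib

/-!
STATEMENT 12: Let `Φ : C → C` and `Ψ : D → D` be endofunctors with initial algebras `ι_Φ` and
`ι_Ψ` (with carriers `μΦ` and `μΨ`), let `(L ⊣ R, η, ε) : C ⇄ D` be an adjunction with `L` full
and faithful, let `ρ : LΦR ⇒ Ψ` be a natural transformation, and assume `D` has an initial
object and all colimits of chains.  If (1) the adjoint transpose `ρ‾ : ΦR ⇒ RΨ` of `ρ` is a
natural isomorphism, (2) the initial chain of `Ψ` converges, and (3) every object `Ψ^i 0` of
the initial chain of `Ψ` lies in `Fix_ε(D)`, then the initial algebra correspondence for `Φ`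
and `Ψ` holds, i.e. `ι_Φ` is initial in `Alg(Φ)|Fix_η(C)` and `Alg_{id,ρ}(ι_Ψ)` is initial in
`Alg(LΦR)|Fix_ε(D)`.  Furthermore, if `Fix_ε(D)` is downward closed in `D` (`Y ∈ Fix_ε(D)` and
the existence of a morphism `X → Y` imply `X ∈ Fix_ε(D)`), then condition (3) is implied by the
global reachability condition `μΨ ∈ Fix_ε(D)`.
-/

open CategoryTheory Limits

universe w v₁ v₂ u₁ u₂

variable {C : Type u₁} [Category.{v₁} C] {D : Type u₂} [Category.{v₂} D]

/-- The restriction of the category of `Φ`-algebras to the full subcategory given by `P`. -/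
abbrev AlgSub {E : Type u₁} [Category.{v₁} E] (Φ : E ⥤ E) (P : E → Prop) :=
  ObjectProperty.FullSubcategory (fun A : Endofunctor.Algebra Φ => P A.a)

/-- The inclusion of the ordinals below `i` into `Ordinal`. -/
def belowIncl (i : Ordinal.{w}) : {j : Ordinal.{w} // j < i} ⥤ Ordinal.{w} :=
  Monotone.functor (f := fun j => j.1) fun _ _ h => h

/-- The canonical cocone on the restriction of a chain `W` to the ordinals below `i`,
with cocone point `W.obj i`. -/
def chainCocone {E : Type u₂} [Category.{v₂} E] (W : Ordinal.{w} ⥤ E) (i : Ordinal.{w}) :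
    Cocone (belowIncl i ⋙ W) where
  pt := W.obj i
  ι :=
    { app := fun j => W.map (homOfLE j.2.le)
      naturality := fun j k f => by
        dsimp [belowIncl]
        rw [Category.comp_id, ← W.map_comp]
        congr 1 }

/-- Data exhibiting the functor `W : Ord ⥤ E` as the initial chain of an endofunctor `Ξ`. -/
structure InitialChainData {E : Type u₂} [Category.{v₂} E] (Ξ : E ⥤ E)
    (W : Ordinal.{w} ⥤ E) where
  isInitial : IsInitial (W.obj 0)
  succ_obj : ∀ i : Ordinal.{w}, W.obj (Order.succ i) = Ξ.obj (W.obj i)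
  succ_map : ∀ (i j : Ordinal.{w}) (h : i ≤ j),
    W.map (homOfLE (Order.succ_le_succ h)) =
      eqToHom (succ_obj i) ≫ Ξ.map (W.map (homOfLE h)) ≫ eqToHom (succ_obj j).symm
  isColimit : ∀ i : Ordinal.{w}, Order.IsSuccLimit i → IsColimit (chainCocone W i)

/-! Under (1), `ρ_Y` is invertible as soon as `ε_{ΨY}` is, so (3) makes `ρ` invertible on the
whole initial chain of `Ψ`, which is therefore, up to isomorphism, also the initial chain of
`LΦR`. Adámek's argument applies to both chains at the stage `λ` where the chain of `Ψ`
converges: `Ψ^λ 0` carries the initial `Ψ`-algebra, and `Alg_{id,ρ}` of it is the initial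
`LΦR`-algebra, so `Alg_{id,ρ}(ι_Ψ)` is initial and `μΨ ≅ Ψ^λ 0` lies in `Fix_ε(D)`. Adámek's
argument rests on the unique family of maps `Ψ^i 0 → A` into an algebra `A` that is compatible
with the chain and with the algebra structure, built by transfinite recursion. For `Φ` nothing
is to be shown, since `L` fully faithful makes `η` invertible. The last claim holds because
every `Ψ^i 0` maps to `μΨ`. -/

-- Transport along `ρ` yields successor steps that are isomorphisms rather than equalities.
structure InitialChainUpToIso (F : D ⥤ D) (W : Ordinal.{w} ⥤ D) where
  isInitial : IsInitial (W.obj 0)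
  succIso (i : Ordinal.{w}) : F.obj (W.obj i) ≅ W.obj (Order.succ i)
  succIso_naturality (i j : Ordinal.{w}) (h : i ≤ j) :
    F.map (W.map (homOfLE h)) ≫ (succIso j).hom =
      (succIso i).hom ≫ W.map (homOfLE (Order.succ_le_succ h))
  isColimit (i : Ordinal.{w}) : Order.IsSuccLimit i → IsColimit (chainCocone W i)

def InitialChainData.toInitialChainUpToIso {F : D ⥤ D} {W : Ordinal.{w} ⥤ D}
    (hW : InitialChainData F W) : InitialChainUpToIso F W where
  isInitial := hW.isInitial
  succIso i := eqToIso (hW.succ_obj i).symm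
  succIso_naturality i j h := by simp [hW.succ_map i j h]
  isColimit := hW.isColimit

namespace InitialChainUpToIso

variable {F : D ⥤ D} {W : Ordinal.{w} ⥤ D}

lemma hom_ext (S : InitialChainUpToIso F W) {A : D} {k : Ordinal.{w}} {f g : W.obj k ⟶ A}
    (hsucc : ∀ m (hm : Order.succ m ≤ k),
      W.map (homOfLE ((Order.le_succ m).trans hm)) ≫ f =
          W.map (homOfLE ((Order.le_succ m).trans hm)) ≫ g →
        W.map (homOfLE hm) ≫ f = W.map (homOfLE hm) ≫ g) :
    f = g := by
  suffices h : ∀ j (hj : j ≤ k), W.map (homOfLE hj) ≫ f = W.map (homOfLE hj) ≫ g by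
    simpa [homOfLE_refl] using h k le_rfl
  intro j
  induction j using WellFoundedLT.induction with
  | _ j ih =>
    intro hj
    obtain rfl | ⟨m, rfl⟩ | hlim := Ordinal.zero_or_succ_or_isSuccLimit j
    · exact S.isInitial.hom_ext _ _
    · exact hsucc m hj (ih m (Order.lt_succ m) _)
    · refine (S.isColimit j hlim).hom_ext fun i => ?_
      simp only [chainCocone, ← W.map_comp_assoc]
      exact ih i.1 i.2 _

variable (S : InitialChainUpToIso F W)

def IsRecursive (A : Endofunctor.Algebra F) {k : Ordinal.{w}} (x : W.obj k ⟶ A.a) : Prop :=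
  ∀ m (hm : Order.succ m ≤ k), (S.succIso m).hom ≫ W.map (homOfLE hm) ≫ x =
    F.map (W.map (homOfLE ((Order.le_succ m).trans hm)) ≫ x) ≫ A.str

variable {S} {A : Endofunctor.Algebra F}

lemma IsRecursive.restrict {k : Ordinal.{w}} {x : W.obj k ⟶ A.a} (hx : S.IsRecursive A x)
    {j : Ordinal.{w}} (hjk : j ≤ k) : S.IsRecursive A (W.map (homOfLE hjk) ≫ x) := by
  intro m hm
  simpa only [← W.map_comp_assoc, homOfLE_comp] using hx m (hm.trans hjk)

lemma IsRecursive.ext {k : Ordinal.{w}} {x y : W.obj k ⟶ A.a} (hx : S.IsRecursive A x)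
    (hy : S.IsRecursive A y) : x = y :=
  S.hom_ext fun m hm h => by rw [← cancel_epi (S.succIso m).hom, hx m hm, hy m hm, h]

lemma IsRecursive.succ {i : Ordinal.{w}} {x : W.obj i ⟶ A.a} (hx : S.IsRecursive A x) :
    S.IsRecursive A ((S.succIso i).inv ≫ F.map x ≫ A.str) := by
  set y := (S.succIso i).inv ≫ F.map x ≫ A.str
  have hy : ∀ m (hm : m ≤ i), (S.succIso m).hom ≫ W.map (homOfLE (Order.succ_le_succ hm)) ≫ y =
      F.map (W.map (homOfLE hm) ≫ x) ≫ A.str := by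
    intro m hm
    rw [← Category.assoc, ← S.succIso_naturality m i hm]
    simp [y]
  have hres : W.map (homOfLE (Order.le_succ i)) ≫ y = x :=
    S.hom_ext fun m hm _ => by
      rw [← cancel_epi (S.succIso m).hom, ← W.map_comp_assoc, homOfLE_comp, hx m hm,
        hy m ((Order.le_succ m).trans hm)]
  intro m hm
  have hmi : m ≤ i := Order.succ_le_succ_iff.mp hm
  rw [hy m hmi, ← homOfLE_comp hmi (Order.le_succ i), W.map_comp_assoc, hres]

lemma exists_isRecursive_of_isSuccLimit {k : Ordinal.{w}} (hk : Order.IsSuccLimit k)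
    (h : ∀ j < k, ∃ x : W.obj j ⟶ A.a, S.IsRecursive A x) :
    ∃ x : W.obj k ⟶ A.a, S.IsRecursive A x := by
  choose x hx using h
  have compat : ∀ i j (hi : i < k) (hj : j < k) (hij : i ≤ j),
      W.map (homOfLE hij) ≫ x j hj = x i hi :=
    fun i j hi hj hij => ((hx j hj).restrict hij).ext (hx i hi)
  let c : Cocone (belowIncl k ⋙ W) :=
    { pt := A.a
      ι := { app := fun j => x j.1 j.2
             naturality := fun i j f =>
               (compat _ _ i.2 j.2 (leOfHom f)).trans (Category.comp_id _).symm } }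
  have hdesc : ∀ j (hj : j < k), W.map (homOfLE hj.le) ≫ (S.isColimit k hk).desc c = x j hj :=
    fun j hj => (S.isColimit k hk).fac c ⟨j, hj⟩
  refine ⟨(S.isColimit k hk).desc c, fun m hm => ?_⟩
  have hm' : Order.succ m < k := hk.succ_lt (Order.succ_le_iff.mp hm)
  rw [hdesc _ hm', hdesc m ((Order.lt_succ m).trans hm'),
    ← compat m _ ((Order.lt_succ m).trans hm') hm' (Order.le_succ m)]
  simpa [homOfLE_refl] using hx _ hm' m le_rfl

variable (S A) in
lemma exists_isRecursive (k : Ordinal.{w}) : ∃ x : W.obj k ⟶ A.a, S.IsRecursive A x := by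
  induction k using WellFoundedLT.induction with
  | _ k ih =>
  obtain rfl | ⟨i, rfl⟩ | hk := Ordinal.zero_or_succ_or_isSuccLimit k
  · exact ⟨S.isInitial.to A.a, fun m hm => ((Order.succ_le_iff.mp hm).not_ge zero_le).elim⟩
  · obtain ⟨x, hx⟩ := ih i (Order.lt_succ i)
    exact ⟨_, hx.succ⟩
  · exact exists_isRecursive_of_isSuccLimit hk ih

variable (S) (l : Ordinal.{w}) [IsIso (W.map (homOfLE (Order.le_succ l)))]

noncomputable abbrev convergedAlg : Endofunctor.Algebra F where
  a := W.obj l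
  str := (S.succIso l).hom ≫ inv (W.map (homOfLE (Order.le_succ l)))

variable {S l}

lemma isRecursive_hom (h : S.convergedAlg l ⟶ A) : S.IsRecursive A h.f := by
  intro m hm
  rw [Functor.map_comp_assoc, h.h, Category.assoc, ← Category.assoc (F.map _),
    S.succIso_naturality m l ((Order.le_succ m).trans hm), ← homOfLE_comp hm (Order.le_succ l),
    W.map_comp]
  simp only [Category.assoc, IsIso.hom_inv_id_assoc]

variable (S l)

noncomputable def isInitialConvergedAlg : IsInitial (S.convergedAlg l) :=
  IsInitial.ofUniqueHom
    (fun A =>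
      { f := W.map (homOfLE (Order.le_succ l)) ≫ (S.exists_isRecursive A (Order.succ l)).choose
        h := by
          rw [← (S.exists_isRecursive A (Order.succ l)).choose_spec l le_rfl]
          simp [homOfLE_refl] })
    (fun A h => Endofunctor.Algebra.Hom.ext
      ((isRecursive_hom h).ext ((S.exists_isRecursive A _).choose_spec.restrict _)))

variable {G : D ⥤ D}

@[simps]
noncomputable def ofNatTrans (S : InitialChainUpToIso G W) (ρ : F ⟶ G)
    (hρ : ∀ i, IsIso (ρ.app (W.obj i))) : InitialChainUpToIso F W where
  isInitial := S.isInitial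
  succIso i := asIso (ρ.app (W.obj i)) ≪≫ S.succIso i
  succIso_naturality i j h := by simp [S.succIso_naturality]
  isColimit := S.isColimit

lemma ofNatTrans_convergedAlg (S : InitialChainUpToIso G W) (ρ : F ⟶ G)
    (hρ : ∀ i, IsIso (ρ.app (W.obj i))) (l : Ordinal.{w})
    [IsIso (W.map (homOfLE (Order.le_succ l)))] :
    (S.ofNatTrans ρ hρ).convergedAlg l =
      (Endofunctor.Algebra.functorOfNatTrans ρ).obj (S.convergedAlg l) := by
  simp [convergedAlg, Endofunctor.Algebra.functorOfNatTrans]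

noncomputable def isInitialFunctorOfNatTransObj (S : InitialChainUpToIso G W) (ρ : F ⟶ G)
    (hρ : ∀ i, IsIso (ρ.app (W.obj i))) (l : Ordinal.{w})
    [IsIso (W.map (homOfLE (Order.le_succ l)))] {A : Endofunctor.Algebra G} (hA : IsInitial A) :
    IsInitial ((Endofunctor.Algebra.functorOfNatTrans ρ).obj A) :=
  ((S.ofNatTrans ρ hρ).isInitialConvergedAlg l).ofIso
    (eqToIso (S.ofNatTrans_convergedAlg ρ hρ l) ≪≫
      (Endofunctor.Algebra.functorOfNatTrans ρ).mapIso
        ((S.isInitialConvergedAlg l).uniqueUpToIso hA))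

end InitialChainUpToIso

lemma CategoryTheory.Adjunction.isIso_of_isIso_unit_comp_map {L : C ⥤ D} {R : D ⥤ C}
    (adj : L ⊣ R) [L.Full] [L.Faithful] {X : C} {Z : D} (g : L.obj X ⟶ Z)
    [IsIso (adj.unit.app X ≫ R.map g)] [IsIso (adj.counit.app Z)] : IsIso g := by
  have : IsIso (R.map g) := IsIso.of_isIso_comp_left (adj.unit.app X) _
  have : IsIso (adj.counit.app (L.obj X) ≫ g) := by
    rw [← adj.counit_naturality g]; infer_instance
  exact IsIso.of_isIso_comp_left (adj.counit.app (L.obj X)) g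

theorem stmt12_general (Φ : C ⥤ C) (Ψ : D ⥤ D) (L : C ⥤ D) (R : D ⥤ C) (adj : L ⊣ R)
    [L.Full] [L.Faithful]
    (ρ : (R ⋙ Φ ⋙ L) ⟶ Ψ)
    -- the initial algebras `ι_Φ` and `ι_Ψ`
    (ιΦ : Endofunctor.Algebra Φ) (hιΦ : IsInitial ιΦ)
    (ιΨ : Endofunctor.Algebra Ψ) (hιΨ : IsInitial ιΨ)
    -- the initial chain of `Ψ`
    (W : Ordinal.{w} ⥤ D) (hW : InitialChainData Ψ W)
    -- (1) the adjoint transpose `ρ‾ : ΦR ⇒ RΨ` of `ρ` is a natural isomorphism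
    (h₁ : ∀ Y : D, IsIso (adj.unit.app (Φ.obj (R.obj Y)) ≫ R.map (ρ.app Y)))
    -- (2) the initial chain of `Ψ` converges
    (h₂ : ∃ l : Ordinal.{w}, IsIso (W.map (homOfLE (Order.le_succ l)))) :
    -- if (3) the initial chain of `Ψ` lies in `Fix_ε(D)`, the correspondence holds
    ((∀ i : Ordinal.{w}, IsIso (adj.counit.app (W.obj i))) →
      (∃ h : IsIso (adj.unit.app ιΦ.a),
        Nonempty (IsInitial (⟨ιΦ, h⟩ : AlgSub Φ (fun X : C => IsIso (adj.unit.app X))))) ∧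
      (∃ h : IsIso (adj.counit.app ιΨ.a),
        Nonempty (IsInitial
          (⟨⟨ιΨ.a, ρ.app ιΨ.a ≫ ιΨ.str⟩, h⟩ :
            AlgSub (R ⋙ Φ ⋙ L) (fun Y : D => IsIso (adj.counit.app Y)))))) ∧
    -- furthermore: downward closedness of `Fix_ε(D)` + global reachability imply (3)
    ((∀ X Y : D, (X ⟶ Y) → IsIso (adj.counit.app Y) → IsIso (adj.counit.app X)) →
      IsIso (adj.counit.app ιΨ.a) →
      ∀ i : Ordinal.{w}, IsIso (adj.counit.app (W.obj i))) := by
  obtain ⟨l, hl⟩ := h₂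
  let S := hW.toInitialChainUpToIso
  refine ⟨fun hfix => ⟨⟨inferInstance, ⟨?_⟩⟩, ?_⟩,
    fun hdown hμ i => (S.exists_isRecursive ιΨ i).elim fun x _ => hdown _ _ x hμ⟩
  · exact IsInitial.isInitialOfObj (ObjectProperty.ι _) _ hιΦ
  have hρ (i : Ordinal.{w}) : IsIso (ρ.app (W.obj i)) := by
    have := h₁ (W.obj i)
    have := hfix (Order.succ i)
    rw [hW.succ_obj] at this
    exact adj.isIso_of_isIso_unit_comp_map _
  have hμ : IsIso (adj.counit.app ιΨ.a) :=
    (NatTrans.isIso_app_iff_of_iso _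
      ((Endofunctor.Algebra.forget Ψ).mapIso ((S.isInitialConvergedAlg l).uniqueUpToIso hιΨ))).mp
      (hfix l)
  exact ⟨hμ, ⟨IsInitial.isInitialOfObj (ObjectProperty.ι _) _
    (S.isInitialFunctorOfNatTransObj ρ hρ l hιΨ)⟩⟩

theorem stmt12 (Φ : C ⥤ C) (Ψ : D ⥤ D) (L : C ⥤ D) (R : D ⥤ C) (adj : L ⊣ R)
    [L.Full] [L.Faithful]
    (ρ : (R ⋙ Φ ⋙ L) ⟶ Ψ)
    -- `D` has an initial object and all colimits of chains
    [HasInitial D] (hchains : ∀ (J : Type (w + 1)) (_ : LinearOrder J), HasColimitsOfShape J D)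
    -- the initial algebras `ι_Φ` and `ι_Ψ`
    (ιΦ : Endofunctor.Algebra Φ) (hιΦ : IsInitial ιΦ)
    (ιΨ : Endofunctor.Algebra Ψ) (hιΨ : IsInitial ιΨ)
    -- the initial chain of `Ψ`
    (W : Ordinal.{w} ⥤ D) (hW : InitialChainData Ψ W)
    -- (1) the adjoint transpose `ρ‾ : ΦR ⇒ RΨ` of `ρ` is a natural isomorphism
    (h₁ : ∀ Y : D, IsIso (adj.unit.app (Φ.obj (R.obj Y)) ≫ R.map (ρ.app Y)))
    -- (2) the initial chain of `Ψ` converges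
    (h₂ : ∃ l : Ordinal.{w}, IsIso (W.map (homOfLE (Order.le_succ l)))) :
    -- if (3) the initial chain of `Ψ` lies in `Fix_ε(D)`, the correspondence holds
    ((∀ i : Ordinal.{w}, IsIso (adj.counit.app (W.obj i))) →
      (∃ h : IsIso (adj.unit.app ιΦ.a),
        Nonempty (IsInitial (⟨ιΦ, h⟩ : AlgSub Φ (fun X : C => IsIso (adj.unit.app X))))) ∧
      (∃ h : IsIso (adj.counit.app ιΨ.a),
        Nonempty (IsInitial
          (⟨⟨ιΨ.a, ρ.app ιΨ.a ≫ ιΨ.str⟩, h⟩ :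
            AlgSub (R ⋙ Φ ⋙ L) (fun Y : D => IsIso (adj.counit.app Y)))))) ∧
    -- furthermore: downward closedness of `Fix_ε(D)` + global reachability imply (3)
    ((∀ X Y : D, (X ⟶ Y) → IsIso (adj.counit.app Y) → IsIso (adj.counit.app X)) →
      IsIso (adj.counit.app ιΨ.a) →
      ∀ i : Ordinal.{w}, IsIso (adj.counit.app (W.obj i))) :=
  stmt12_general Φ Ψ L R adj ρ ιΦ hιΦ ιΨ hιΨ W hW h₁ h₂
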